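/- arXiv:1907.07966 — 2 statements merged into one kernel-verified Lean document; each statement's English description precedes it below -/
import Mathlib

section
/- For every Bernstein function φ (not identically zero) and every complex z, the limit as u → ∞ (u real) of φ(u + z)/φ(u) equals 1, uniformly for z in compact subsets of ℂ. -/
/-!
For `‖z‖ ≤ R ≤ u` the difference `Φ(u+z) - Φ(u) = d z + ∫ e^{-uy} (1 - e^{-zy}) Π(dy)` is at most
`d R + C ∫ e^{-(u-R)y} min(y,1) Π(dy)` in norm, and the integral tends to `0` by dominated
convergence. On the other hand `Φ(u)` is real, nondecreasing, eventually positive and at least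
`d u`, so `‖Φ(u+z)/Φ(u) - 1‖ ≤ R/u + C' ∫ e^{-(u-R)y} min(y,1) Π(dy)`, uniformly in `z`.
-/

open MeasureTheory Filter

open scoped Topology Real Complex

lemma min_mul_one_le_max_mul_min_one (a : ℝ) {y : ℝ} (hy : 0 ≤ y) :
    min (a * y) 1 ≤ max a 1 * min y 1 := by
  rcases le_total y 1 with h | h
  · rw [min_eq_left h]
    exact (min_le_left _ _).trans (by nlinarith [le_max_left a 1])
  · rw [min_eq_right h, mul_one]
    exact (min_le_right _ _).trans (le_max_right a 1)

lemma Complex.norm_one_sub_exp_le (ζ : ℂ) :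
    ‖1 - cexp ζ‖ ≤ 2 * rexp (max ζ.re 0) * min ‖ζ‖ 1 := by
  have hexp : 1 ≤ rexp (max ζ.re 0) := Real.one_le_exp (le_max_right _ _)
  rcases le_total ‖ζ‖ 1 with h | h
  · rw [min_eq_left h, norm_sub_rev]
    calc ‖cexp ζ - 1‖ ≤ 2 * ‖ζ‖ := Complex.norm_exp_sub_one_le h
      _ ≤ 2 * rexp (max ζ.re 0) * ‖ζ‖ := by nlinarith [norm_nonneg ζ]
  · rw [min_eq_right h, mul_one]
    calc ‖1 - cexp ζ‖ ≤ 1 + rexp ζ.re := by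
          simpa [Complex.norm_exp] using norm_sub_le (1 : ℂ) (cexp ζ)
      _ ≤ 2 * rexp (max ζ.re 0) := by
          linarith [Real.exp_le_exp.2 (le_max_left ζ.re 0)]

lemma tendstoUniformlyOn_of_dist_le {ι α β : Type*} [PseudoMetricSpace β] {F : ι → α → β}
    {f : α → β} {l : Filter ι} {s : Set α} {g : ι → ℝ} (hg : Tendsto g l (𝓝 0))
    (hFg : ∀ᶠ i in l, ∀ x ∈ s, dist (f x) (F i x) ≤ g i) : TendstoUniformlyOn F f l s := by
  rw [Metric.tendstoUniformlyOn_iff]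
  intro ε hε
  filter_upwards [hFg, hg.eventually (gt_mem_nhds hε)] with i hi hgi x hx
  exact (hi x hx).trans_lt hgi

section LevyIntegrals

variable {μ : Measure ℝ}

lemma integrable_min_one_of_lintegral_ne_top (hpos : ∀ᵐ y ∂μ, 0 ≤ y)
    (hμ : ∫⁻ y, ENNReal.ofReal (min y 1) ∂μ ≠ ⊤) : Integrable (fun y => min y 1) μ :=
  (lintegral_ofReal_ne_top_iff_integrable (by fun_prop)
    (hpos.mono fun _ hy => le_min hy zero_le_one)).1 hμ

lemma integrable_one_sub_exp_neg_mul (hpos : ∀ᵐ y ∂μ, 0 ≤ y)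
    (hint : Integrable (fun y => min y 1) μ) {u : ℝ} (hu : 0 ≤ u) :
    Integrable (fun y => 1 - rexp (-(u * y))) μ := by
  refine (hint.const_mul (max u 1)).mono' (by fun_prop) ?_
  filter_upwards [hpos] with y hy
  have hle : rexp (-(u * y)) ≤ 1 := Real.exp_le_one_iff.2 (by nlinarith)
  rw [Real.norm_eq_abs, abs_of_nonneg (by linarith)]
  calc 1 - rexp (-(u * y)) ≤ min (u * y) 1 :=
        le_min (by linarith [Real.add_one_le_exp (-(u * y))])
          (by linarith [Real.exp_pos (-(u * y))])
    _ ≤ max u 1 * min y 1 := min_mul_one_le_max_mul_min_one u hy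

lemma integrable_one_sub_cexp_neg_mul (hpos : ∀ᵐ y ∂μ, 0 ≤ y)
    (hint : Integrable (fun y => min y 1) μ) {w : ℂ} (hw : 0 ≤ w.re) :
    Integrable (fun y : ℝ => 1 - cexp (-(w * y))) μ := by
  refine (hint.const_mul (2 * max ‖w‖ 1)).mono' (by fun_prop) ?_
  filter_upwards [hpos] with y hy
  have hre : max (-(w.re * y)) 0 = 0 := max_eq_right (by nlinarith)
  have hnorm : ‖-(w * y)‖ = ‖w‖ * y := by simp [abs_of_nonneg hy]
  calc ‖1 - cexp (-(w * y))‖ ≤ 2 * min (‖w‖ * y) 1 := by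
        simpa [hre, hnorm] using Complex.norm_one_sub_exp_le (-(w * y))
    _ ≤ 2 * max ‖w‖ 1 * min y 1 := by
        linarith [min_mul_one_le_max_mul_min_one ‖w‖ hy]

lemma integrable_exp_neg_mul_mul_min_one (hpos : ∀ᵐ y ∂μ, 0 ≤ y)
    (hint : Integrable (fun y => min y 1) μ) {u : ℝ} (hu : 0 ≤ u) :
    Integrable (fun y => rexp (-(u * y)) * min y 1) μ := by
  refine hint.mono' (by fun_prop) ?_
  filter_upwards [hpos] with y hy
  have hmin : 0 ≤ min y 1 := le_min hy zero_le_one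
  rw [Real.norm_eq_abs, abs_of_nonneg (by positivity)]
  exact mul_le_of_le_one_left hmin (Real.exp_le_one_iff.2 (by nlinarith))

lemma tendsto_integral_exp_neg_mul_mul_min_one (hpos : ∀ᵐ y ∂μ, 0 < y)
    (hint : Integrable (fun y => min y 1) μ) :
    Tendsto (fun u => ∫ y, rexp (-(u * y)) * min y 1 ∂μ) atTop (𝓝 0) := by
  have hlim := tendsto_integral_filter_of_dominated_convergence (l := atTop) (μ := μ)
    (F := fun u y => rexp (-(u * y)) * min y 1) (f := fun _ => 0) _
    (Eventually.of_forall fun _ => by fun_prop) ?_ hint ?_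
  · simpa using hlim
  · filter_upwards [eventually_ge_atTop 0] with u hu
    filter_upwards [hpos] with y hy
    have hmin : 0 ≤ min y 1 := le_min hy.le zero_le_one
    rw [Real.norm_eq_abs, abs_of_nonneg (by positivity)]
    exact mul_le_of_le_one_left hmin (Real.exp_le_one_iff.2 (by nlinarith))
  · filter_upwards [hpos] with y hy
    have hexp : Tendsto (fun u => rexp (-(u * y))) atTop (𝓝 0) :=
      Real.tendsto_exp_atBot.comp (tendsto_neg_atTop_atBot.comp (tendsto_id.atTop_mul_const hy))
    simpa using hexp.mul_const (min y 1)

end LevyIntegrals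

noncomputable def bernsteinExt (φ0 d : ℝ) (μ : Measure ℝ) (w : ℂ) : ℂ :=
  φ0 + d * w + ∫ y, (1 - cexp (-(w * y))) ∂μ

noncomputable def bernsteinReal (φ0 d : ℝ) (μ : Measure ℝ) (u : ℝ) : ℝ :=
  φ0 + d * u + ∫ y, (1 - rexp (-(u * y))) ∂μ

section Bernstein

variable {φ0 d : ℝ} {μ : Measure ℝ}

lemma bernsteinExt_ofReal (u : ℝ) : bernsteinExt φ0 d μ u = bernsteinReal φ0 d μ u := by
  have hint : ∫ y, (1 - cexp (-(u * y))) ∂μ = ((∫ y, (1 - rexp (-(u * y))) ∂μ : ℝ) : ℂ) := by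
    rw [← integral_complex_ofReal]
    push_cast [Complex.ofReal_exp]
    rfl
  simp only [bernsteinExt, bernsteinReal, hint]
  push_cast
  rfl

lemma mul_le_bernsteinReal (hφ0 : 0 ≤ φ0) (hpos : ∀ᵐ y ∂μ, 0 ≤ y) {u : ℝ} (hu : 0 ≤ u) :
    d * u ≤ bernsteinReal φ0 d μ u := by
  have hI : 0 ≤ ∫ y, (1 - rexp (-(u * y))) ∂μ := by
    refine integral_nonneg_of_ae ?_
    filter_upwards [hpos] with y hy
    exact sub_nonneg.2 (Real.exp_le_one_iff.2 (by nlinarith))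
  simp only [bernsteinReal]
  linarith

lemma bernsteinReal_monotoneOn (hd : 0 ≤ d) (hpos : ∀ᵐ y ∂μ, 0 ≤ y)
    (hint : Integrable (fun y => min y 1) μ) :
    MonotoneOn (bernsteinReal φ0 d μ) (Set.Ici 0) := by
  intro u hu v hv huv
  have hI : ∫ y, (1 - rexp (-(u * y))) ∂μ ≤ ∫ y, (1 - rexp (-(v * y))) ∂μ := by
    refine integral_mono_ae (integrable_one_sub_exp_neg_mul hpos hint hu)
      (integrable_one_sub_exp_neg_mul hpos hint hv) ?_
    filter_upwards [hpos] with y hy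
    have : rexp (-(v * y)) ≤ rexp (-(u * y)) := Real.exp_le_exp.2 (by nlinarith)
    linarith
  simp only [bernsteinReal]
  nlinarith

lemma norm_cexp_neg_mul_mul_one_sub_le {u y R : ℝ} {z : ℂ} (hy : 0 ≤ y) (hz : ‖z‖ ≤ R) :
    ‖cexp (-(u * y)) * (1 - cexp (-(z * y)))‖ ≤
      2 * max R 1 * (rexp (-((u - R) * y)) * min y 1) := by
  have hre : max (-(z.re * y)) 0 ≤ R * y :=
    max_le (by nlinarith [Complex.abs_re_le_norm z, abs_le.1 (Complex.abs_re_le_norm z)])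
      (by nlinarith [norm_nonneg z])
  have hmin : min (‖z‖ * y) 1 ≤ max R 1 * min y 1 :=
    (min_le_min_right 1 (by nlinarith)).trans (min_mul_one_le_max_mul_min_one R hy)
  have hbound := Complex.norm_one_sub_exp_le (-(z * y))
  simp only [Complex.neg_re, Complex.mul_re, Complex.ofReal_re, Complex.ofReal_im, mul_zero,
    sub_zero, norm_neg, norm_mul, Complex.norm_real, Real.norm_eq_abs, abs_of_nonneg hy] at hbound
  rw [norm_mul, Complex.norm_exp]
  simp only [Complex.neg_re, Complex.mul_re, Complex.ofReal_re, Complex.ofReal_im, mul_zero,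
    sub_zero]
  calc rexp (-(u * y)) * ‖1 - cexp (-(z * y))‖
      ≤ rexp (-(u * y)) * (2 * rexp (R * y) * (max R 1 * min y 1)) := by
        refine mul_le_mul_of_nonneg_left (hbound.trans ?_) (Real.exp_pos _).le
        gcongr
    _ = 2 * max R 1 * (rexp (-((u - R) * y)) * min y 1) := by
        rw [show -((u - R) * y) = -(u * y) + R * y by ring, Real.exp_add]
        ring

lemma norm_bernsteinExt_add_sub_le (hd : 0 ≤ d) (hpos : ∀ᵐ y ∂μ, 0 ≤ y)
    (hint : Integrable (fun y => min y 1) μ) {u R : ℝ} {z : ℂ} (hz : ‖z‖ ≤ R) (hRu : R ≤ u) :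
    ‖bernsteinExt φ0 d μ (u + z) - bernsteinExt φ0 d μ u‖ ≤
      d * R + 2 * max R 1 * ∫ y, rexp (-((u - R) * y)) * min y 1 ∂μ := by
  have hzre : -R ≤ z.re := by linarith [neg_abs_le z.re, Complex.abs_re_le_norm z]
  have hint_add : Integrable (fun y : ℝ => 1 - cexp (-((u + z) * y))) μ :=
    integrable_one_sub_cexp_neg_mul hpos hint
      (by simp only [Complex.add_re, Complex.ofReal_re]; linarith)
  have hint_u : Integrable (fun y : ℝ => 1 - cexp (-(u * y))) μ :=
    integrable_one_sub_cexp_neg_mul hpos hint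
      (by rw [Complex.ofReal_re]; linarith [norm_nonneg z])
  have hsplit : bernsteinExt φ0 d μ (u + z) - bernsteinExt φ0 d μ u =
      d * z + ∫ y, cexp (-(u * y)) * (1 - cexp (-(z * y))) ∂μ := by
    simp only [bernsteinExt]
    rw [add_sub_add_comm, ← integral_sub hint_add hint_u]
    congr 1
    · ring
    · refine integral_congr_ae (Eventually.of_forall fun y => ?_)
      simp only [add_mul, neg_add, Complex.exp_add]
      ring
  have hintegral : ‖∫ y, cexp (-(u * y)) * (1 - cexp (-(z * y))) ∂μ‖ ≤
      ∫ y, 2 * max R 1 * (rexp (-((u - R) * y)) * min y 1) ∂μ :=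
    norm_integral_le_of_norm_le
      ((integrable_exp_neg_mul_mul_min_one hpos hint (sub_nonneg.2 hRu)).const_mul _)
      (hpos.mono fun y hy => norm_cexp_neg_mul_mul_one_sub_le hy hz)
  rw [hsplit, ← integral_const_mul]
  calc _ ≤ ‖(d : ℂ) * z‖ + _ := norm_add_le _ _
    _ ≤ _ := by
      rw [norm_mul, Complex.norm_real, Real.norm_of_nonneg hd]
      gcongr

lemma tendstoUniformlyOn_bernsteinExt_div (hφ0 : 0 ≤ φ0) (hd : 0 ≤ d)
    (hpos : ∀ᵐ y ∂μ, 0 < y) (hint : Integrable (fun y => min y 1) μ)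
    (hne : ∃ u, 0 < u ∧ bernsteinReal φ0 d μ u ≠ 0) {K : Set ℂ} (hK : IsCompact K) :
    TendstoUniformlyOn (fun (u : ℝ) z => bernsteinExt φ0 d μ (u + z) / bernsteinExt φ0 d μ u)
      (fun _ => 1) atTop K := by
  have hnonneg : ∀ᵐ y ∂μ, 0 ≤ y := hpos.mono fun _ => le_of_lt
  obtain ⟨R, hR, hKR⟩ := hK.isBounded.exists_pos_norm_le
  obtain ⟨u0, hu0, hu0ne⟩ := hne
  have hc : 0 < bernsteinReal φ0 d μ u0 :=
    ((mul_nonneg hd hu0.le).trans (mul_le_bernsteinReal hφ0 hnonneg hu0.le)).lt_of_ne' hu0ne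
  set c := bernsteinReal φ0 d μ u0
  set G := fun u => ∫ y, rexp (-(u * y)) * min y 1 ∂μ
  have hG : Tendsto (fun u => R / u + 2 * max R 1 * G (u - R) / c) atTop (𝓝 0) := by
    have h := ((tendsto_const_nhds (x := R)).div_atTop tendsto_id).add
      (((tendsto_integral_exp_neg_mul_mul_min_one hpos hint).comp
        (tendsto_atTop_add_const_right atTop (-R) tendsto_id)).const_mul (2 * max R 1)
        |>.div_const c)
    simpa [sub_eq_add_neg] using h
  refine tendstoUniformlyOn_of_dist_le hG ?_
  filter_upwards [eventually_ge_atTop u0, eventually_ge_atTop R] with u hu0u hRu z hz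
  have hu : 0 < u := hu0.trans_le hu0u
  have hcu : c ≤ bernsteinReal φ0 d μ u :=
    bernsteinReal_monotoneOn hd hnonneg hint (Set.mem_Ici.2 hu0.le) (Set.mem_Ici.2 hu.le) hu0u
  have hdu : d * u ≤ bernsteinReal φ0 d μ u := mul_le_bernsteinReal hφ0 hnonneg hu.le
  have hBu : 0 < bernsteinReal φ0 d μ u := hc.trans_le hcu
  have hGu : 0 ≤ G (u - R) := integral_nonneg_of_ae <| hnonneg.mono fun y hy =>
    mul_nonneg (Real.exp_pos _).le (le_min hy zero_le_one)
  have hBu_norm : ‖bernsteinExt φ0 d μ u‖ = bernsteinReal φ0 d μ u := by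
    rw [bernsteinExt_ofReal, Complex.norm_real, Real.norm_of_nonneg hBu.le]
  rw [dist_eq_norm, one_sub_div (norm_pos_iff.1 (hBu_norm ▸ hBu)), norm_div, norm_sub_rev,
    hBu_norm]
  calc _ ≤ (d * R + 2 * max R 1 * G (u - R)) / bernsteinReal φ0 d μ u :=
        div_le_div_of_nonneg_right (norm_bernsteinExt_add_sub_le hd hnonneg hint (hKR z hz) hRu)
          hBu.le
    _ = d * R / bernsteinReal φ0 d μ u + 2 * max R 1 * G (u - R) / bernsteinReal φ0 d μ u :=
        add_div _ _ _
    _ ≤ R / u + 2 * max R 1 * G (u - R) / c := by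
        refine add_le_add ?_ (by gcongr)
        rw [div_le_div_iff₀ hBu hu]
        nlinarith

end Bernstein

/-- For a nonzero Bernstein function `Φ`, extended holomorphically to the right half-plane via
`Φ(w) = φ0 + d·w + ∫ (1 - e^{-wy}) Π(dy)`, one has `Φ(u+z)/Φ(u) → 1` as the real variable
`u → ∞`, uniformly for `z` in compact subsets of `ℂ`. -/
theorem bernstein_ratio_tendsto_one_complex (Φ : ℂ → ℂ) (φ0 d : ℝ) (hφ0 : 0 ≤ φ0) (hd : 0 ≤ d)
    (μ : Measure ℝ) (hμ0 : μ (Set.Iic 0) = 0)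
    (hμint : ∫⁻ y, ENNReal.ofReal (min y 1) ∂μ ≠ ⊤)
    (hrep : ∀ w : ℂ, 0 < w.re →
      Φ w = (φ0 : ℂ) + (d : ℂ) * w + ∫ y, (1 - Complex.exp (-(w * (y : ℂ)))) ∂μ)
    (hne : ∃ u : ℝ, 0 < u ∧ Φ u ≠ 0) :
    ∀ K : Set ℂ, IsCompact K →
      TendstoUniformlyOn (fun (u : ℝ) (z : ℂ) => Φ ((u : ℂ) + z) / Φ (u : ℂ))
        (fun _ => 1) atTop K := by
  intro K hK
  have hΦ : ∀ w : ℂ, 0 < w.re → Φ w = bernsteinExt φ0 d μ w := hrep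
  have hpos : ∀ᵐ y ∂μ, 0 < y := by
    simpa only [ae_iff, not_lt, Set.Iic] using hμ0
  have hint := integrable_min_one_of_lintegral_ne_top (hpos.mono fun _ => le_of_lt) hμint
  have hne' : ∃ u, 0 < u ∧ bernsteinReal φ0 d μ u ≠ 0 := by
    obtain ⟨u, hu, hΦu⟩ := hne
    refine ⟨u, hu, fun h => hΦu ?_⟩
    rw [hΦ u (by simpa using hu), bernsteinExt_ofReal, h, Complex.ofReal_zero]
  obtain ⟨R, hKR⟩ := hK.isBounded.exists_norm_le
  refine (tendstoUniformlyOn_bernsteinExt_div hφ0 hd hpos hint hne' hK).congr ?_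
  filter_upwards [eventually_gt_atTop R, eventually_gt_atTop 0] with u hRu hu z hz
  have hre : 0 < ((u : ℂ) + z).re := by
    simp only [Complex.add_re, Complex.ofReal_re]
    linarith [neg_abs_le z.re, Complex.abs_re_le_norm z, hKR z hz]
  simp only [hΦ _ hre, hΦ u (by simpa using hu)]
end

section
/- A Bernstein function preserves angular sectors: for every Bernstein function φ and every complex w with Re(w) > 0, one has |arg(φ(w))| ≤ |arg(w)|, where arg takes values in (−π, π]. -/
open MeasureTheory

/-!
For `Re w > 0`, `{0} ∪ {z | |arg z| ≤ |arg w|}` is the cone `Re w |Im z| ≤ |Im w| Re z, 0 ≤ Re z`.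
Being cut out by inequalities in `Re z` and `|Im z|` that are preserved by sums and integrals, it
is closed under integration against a positive measure. It contains `φ(0)` and `d w`, and it
contains `1 - e^{-wy}` for `y ≥ 0`: it depends only on the ray through `w`, and `1 - e^{-w}` lies in
it, which comes down to `|sin v| ≤ |v|` and `u e^{-u} ≤ 1 - e^{-u}`.
-/

namespace Real

theorem mul_exp_neg_le_one_sub_exp_neg (u : ℝ) : u * exp (-u) ≤ 1 - exp (-u) := by
  have h := mul_le_mul_of_nonneg_right (add_one_le_exp u) (exp_pos (-u)).le
  rw [← exp_add, add_neg_cancel, exp_zero] at h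
  linarith

theorem mul_exp_neg_mul_abs_sin_le {u : ℝ} (hu : 0 ≤ u) (v : ℝ) :
    u * exp (-u) * |sin v| ≤ |v| * (1 - exp (-u) * cos v) :=
  calc u * exp (-u) * |sin v| ≤ (1 - exp (-u)) * |v| :=
        mul_le_mul (mul_exp_neg_le_one_sub_exp_neg u) abs_sin_le_abs (abs_nonneg _)
          (sub_nonneg.2 (exp_le_one_iff.2 (neg_nonpos.2 hu)))
    _ ≤ |v| * (1 - exp (-u) * cos v) := by
        rw [mul_comm]
        gcongr
        exact mul_le_of_le_one_right (exp_pos _).le (cos_le_one v)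

theorem abs_arctan (t : ℝ) : |arctan t| = arctan |t| := by
  rcases le_total 0 t with ht | ht
  · rw [abs_of_nonneg ht, abs_of_nonneg (arctan_nonneg.2 ht)]
  · rw [abs_of_nonpos ht, abs_of_nonpos (arctan_le_zero.2 ht), arctan_neg]

end Real

namespace Complex

def sector (w : ℂ) : Set ℂ := {z | 0 ≤ z.re ∧ w.re * |z.im| ≤ |w.im| * z.re}

variable {w z z' : ℂ}

theorem zero_mem_sector : (0 : ℂ) ∈ sector w := by
  simp [sector]

theorem ofReal_mem_sector {c : ℝ} (hc : 0 ≤ c) : (c : ℂ) ∈ sector w := by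
  simp [sector, hc, mul_nonneg (abs_nonneg w.im) hc]

theorem self_mem_sector (hw : 0 ≤ w.re) : w ∈ sector w :=
  ⟨hw, by rw [mul_comm]⟩

theorem ofReal_mul_mem_sector {c : ℝ} (hc : 0 ≤ c) (hz : z ∈ sector w) :
    (c : ℂ) * z ∈ sector w := by
  obtain ⟨hre, him⟩ := hz
  refine ⟨by simpa using mul_nonneg hc hre, ?_⟩
  simp only [re_ofReal_mul, im_ofReal_mul, abs_mul, abs_of_nonneg hc]
  nlinarith

theorem add_mem_sector (hw : 0 ≤ w.re) (hz : z ∈ sector w) (hz' : z' ∈ sector w) :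
    z + z' ∈ sector w := by
  obtain ⟨hre, him⟩ := hz
  obtain ⟨hre', him'⟩ := hz'
  refine ⟨by simp only [add_re]; positivity, ?_⟩
  simp only [add_re, add_im]
  nlinarith [abs_add_le z.im z'.im]

theorem integral_mem_sector {α : Type*} [MeasurableSpace α] {μ : Measure α} {f : α → ℂ}
    (hw : 0 ≤ w.re) (hf : ∀ᵐ x ∂μ, f x ∈ sector w) : ∫ x, f x ∂μ ∈ sector w := by
  by_cases hint : Integrable f μ
  swap
  · rw [integral_undef hint]
    exact zero_mem_sector
  have hre : (∫ x, f x ∂μ).re = ∫ x, (f x).re ∂μ := (integral_re hint).symm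
  have him : (∫ x, f x ∂μ).im = ∫ x, (f x).im ∂μ := (integral_im hint).symm
  rw [sector, Set.mem_ofPred_eq, hre, him]
  refine ⟨integral_nonneg_of_ae (hf.mono fun x hx => hx.1), ?_⟩
  calc w.re * |∫ x, (f x).im ∂μ| ≤ w.re * ∫ x, |(f x).im| ∂μ := by
        gcongr
        exact abs_integral_le_integral_abs
    _ = ∫ x, w.re * |(f x).im| ∂μ := (integral_const_mul _ _).symm
    _ ≤ ∫ x, |w.im| * (f x).re ∂μ :=
        integral_mono_ae (hint.im.abs.const_mul _) (hint.re.const_mul _) (hf.mono fun x hx => hx.2)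
    _ = |w.im| * ∫ x, (f x).re ∂μ := integral_const_mul _ _

theorem mem_sector_mul_ofReal_iff {y : ℝ} (hy : 0 < y) : z ∈ sector (w * y) ↔ z ∈ sector w := by
  simp only [sector, Set.mem_ofPred_eq, mul_re, mul_im, ofReal_re, ofReal_im, mul_zero, sub_zero,
    zero_add, abs_mul, abs_of_pos hy]
  constructor
  · rintro ⟨hre, him⟩
    exact ⟨hre, le_of_mul_le_mul_right (by linarith) hy⟩
  · rintro ⟨hre, him⟩
    exact ⟨hre, by nlinarith⟩

theorem one_sub_exp_neg_mem_sector (hw : 0 ≤ w.re) : 1 - exp (-w) ∈ sector w := by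
  have hre : (1 - exp (-w)).re = 1 - Real.exp (-w.re) * Real.cos w.im := by
    simp [exp_re]
  have him : (1 - exp (-w)).im = Real.exp (-w.re) * Real.sin w.im := by
    simp [exp_im]
  refine ⟨?_, ?_⟩
  · rw [hre, sub_nonneg]
    exact (mul_le_of_le_one_right (Real.exp_pos _).le (Real.cos_le_one _)).trans
      (Real.exp_le_one_iff.2 (neg_nonpos.2 hw))
  · rw [hre, him, abs_mul, abs_of_pos (Real.exp_pos _), ← mul_assoc]
    exact Real.mul_exp_neg_mul_abs_sin_le hw w.im

theorem one_sub_exp_neg_mul_ofReal_mem_sector (hw : 0 ≤ w.re) {y : ℝ} (hy : 0 ≤ y) :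
    1 - exp (-(w * y)) ∈ sector w := by
  rcases hy.eq_or_lt with rfl | hy
  · simpa using zero_mem_sector
  · exact (mem_sector_mul_ofReal_iff hy).1 (one_sub_exp_neg_mem_sector (by simp; positivity))

theorem abs_arg_eq_arctan (hz : 0 < z.re) : |arg z| = Real.arctan (|z.im| / z.re) := by
  obtain ⟨hlo, hhi⟩ := abs_lt.1 (abs_arg_lt_pi_div_two_iff.2 (Or.inl hz))
  rw [← Real.arctan_tan hlo hhi, tan_arg, Real.abs_arctan, abs_div, abs_of_pos hz]

theorem abs_arg_le_of_mem_sector (hw : 0 < w.re) (hz : z ∈ sector w) : |arg z| ≤ |arg w| := by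
  obtain ⟨hre, him⟩ := hz
  rcases hre.eq_or_lt with hre0 | hre
  · have hz0 : z = 0 := by
      refine ext hre0.symm (abs_eq_zero.1 (le_antisymm ?_ (abs_nonneg _)))
      rw [← hre0, mul_zero] at him
      exact nonpos_of_mul_nonpos_right him hw
    simp [hz0]
  · rw [abs_arg_eq_arctan hre, abs_arg_eq_arctan hw, Real.arctan_le_arctan_iff,
      div_le_div_iff₀ hre hw]
    linarith

end Complex

theorem bernstein_preserves_sectors_general (Φ : ℂ → ℂ) (φ0 d : ℝ) (hφ0 : 0 ≤ φ0) (hd : 0 ≤ d)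
    (μ : Measure ℝ) (hμ0 : μ (Set.Iic 0) = 0)
    (hrep : ∀ w : ℂ, 0 < w.re →
      Φ w = (φ0 : ℂ) + (d : ℂ) * w + ∫ y, (1 - Complex.exp (-(w * (y : ℂ)))) ∂μ) :
    ∀ w : ℂ, 0 < w.re → |Complex.arg (Φ w)| ≤ |Complex.arg w| := by
  intro w hw
  have hμ_nonneg : ∀ᵐ y ∂μ, 0 ≤ y := by
    simp only [ae_iff, not_le]
    exact measure_mono_null Set.Iio_subset_Iic_self hμ0
  have hint : ∫ y, (1 - Complex.exp (-(w * (y : ℂ)))) ∂μ ∈ Complex.sector w :=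
    Complex.integral_mem_sector hw.le <| hμ_nonneg.mono fun y hy =>
      Complex.one_sub_exp_neg_mul_ofReal_mem_sector hw.le hy
  have hconst : (φ0 : ℂ) ∈ Complex.sector w := Complex.ofReal_mem_sector hφ0
  have hdrift : (d : ℂ) * w ∈ Complex.sector w :=
    Complex.ofReal_mul_mem_sector hd (Complex.self_mem_sector hw.le)
  rw [hrep w hw]
  exact Complex.abs_arg_le_of_mem_sector hw <|
    Complex.add_mem_sector hw.le (Complex.add_mem_sector hw.le hconst hdrift) hint

/-- A Bernstein function preserves angular sectors: `|arg(Φ(w))| ≤ |arg(w)|` for `Re(w) > 0`. -/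
theorem bernstein_preserves_sectors (Φ : ℂ → ℂ) (φ0 d : ℝ) (hφ0 : 0 ≤ φ0) (hd : 0 ≤ d)
    (μ : Measure ℝ) (hμ0 : μ (Set.Iic 0) = 0)
    (hμint : ∫⁻ y, ENNReal.ofReal (min y 1) ∂μ ≠ ⊤)
    (hrep : ∀ w : ℂ, 0 < w.re →
      Φ w = (φ0 : ℂ) + (d : ℂ) * w + ∫ y, (1 - Complex.exp (-(w * (y : ℂ)))) ∂μ)
    (hne : ¬(φ0 = 0 ∧ d = 0 ∧ μ = 0)) :
    ∀ w : ℂ, 0 < w.re → |Complex.arg (Φ w)| ≤ |Complex.arg w| :=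
  bernstein_preserves_sectors_general Φ φ0 d hφ0 hd μ hμ0 hrep
end
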